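/- arXiv:2403.11968 — 2 statements merged into one kernel-verified Lean document; each statement's English description precedes it below -/
import Mathlib

section
/- Suppose Assumption (A1) holds and let n ∈ ℕ. Then there exists a constant C(n,d) ≥ 1, depending only on n, d, C₁ and C₂, such that for every multi-index v ∈ ℕ^d with ‖v‖₁ ≤ n, every x ∈ ℝ^d, every y ∈ [0,1]^{d_y}, every t > 0 and every 0 < ε ≤ 1/e, the truncation error satisfies ∫_{ℝ^d ∖ B_x} |((α_t z − x)/σ_t)^v| · p(z|y) · (σ_t^d (2π)^{d/2})^{−1} exp(−‖α_t z − x‖₂²/(2σ_t²)) dz ≤ ε, where B_x = { z ∈ ℝ^d : for every coordinate i, (x_i − σ_t C(n,d)√(log ε^{−1}))/α_t ≤ z_i ≤ (x_i + σ_t C(n,d)√(log ε^{−1}))/α_t and −C(n,d)√(log ε^{−1}) ≤ z_i ≤ C(n,d)√(log ε^{−1}) }, and w^v denotes the monomial ∏_i w_i^{v_i}. -/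
/-!
Off the box `B_x` some coordinate has `|z_i| ≥ R` or `|u_i| ≥ R`, where `u = (α_t z - x)/σ_t` and
`R = C √(log ε⁻¹)`. The monomial is absorbed by an eighth of the kernel's exponent,
`|u|^k ≤ exp (2k² + u²/8)`. Of what remains of the exponents of `p` and of the kernel, one half is
at least `min(C₂,1) R²/4` off the box, and the other half is a product of one-dimensional Gaussians
in `z_i` whose integrals, against the kernel's normalisation, are bounded uniformly in `t` because
`α_t² + σ_t² = 1`. The tail is therefore at most `K exp (-min(C₂,1) C² log(ε⁻¹)/4)` with `K`
depending only on `n, d, C₁, C₂`, and this is `≤ ε` once `C` is large.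
-/

open MeasureTheory

noncomputable section

namespace CDM

/-- The ReLU activation function. -/
def relu (x : ℝ) : ℝ := max x 0

/-- The Euclidean norm `‖x‖₂` of a vector `x ∈ ℝ^n`. -/
def norm2 {n : ℕ} (x : Fin n → ℝ) : ℝ := Real.sqrt (∑ i, x i ^ 2)

/-- The sup norm `‖x‖_∞` of a vector `x ∈ ℝ^n`. -/
def normInf {n : ℕ} (x : Fin n → ℝ) : ℝ := ⨆ i, |x i|

/-- A feedforward ReLU network with `depth` affine layers, computing
`x ↦ (A_{L-1} ReLU(·) + b_{L-1}) ∘ ⋯ ∘ (A_0 x + b_0)`. -/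
structure ReLUNet (din dout : ℕ) where
  depth : ℕ
  dims : ℕ → ℕ
  A : (k : ℕ) → Matrix (Fin (dims (k + 1))) (Fin (dims k)) ℝ
  b : (k : ℕ) → Fin (dims (k + 1)) → ℝ
  depth_pos : 1 ≤ depth
  dims_in : dims 0 = din
  dims_out : dims depth = dout

def ReLUNet.evalAux {din dout : ℕ} (net : ReLUNet din dout)
    (x : Fin (net.dims 0) → ℝ) : (k : ℕ) → Fin (net.dims k) → ℝ
  | 0 => x
  | k + 1 => fun i =>
      (∑ j, net.A k i j *
        (if k = 0 then ReLUNet.evalAux net x k j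
         else relu (ReLUNet.evalAux net x k j))) + net.b k i

/-- The function computed by a ReLU network. -/
def ReLUNet.eval {din dout : ℕ} (net : ReLUNet din dout) (x : Fin din → ℝ) :
    Fin dout → ℝ :=
  fun i => net.evalAux (fun j => x (Fin.cast net.dims_in j)) net.depth
    (Fin.cast net.dims_out.symm i)

/-- The number of nonzero parameters of a ReLU network. -/
def ReLUNet.sparsity {din dout : ℕ} (net : ReLUNet din dout) : ℕ :=
  ∑ k ∈ Finset.range net.depth,
    (Nat.card {q : Fin (net.dims (k + 1)) × Fin (net.dims k) // net.A k q.1 q.2 ≠ 0} +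
      Nat.card {i : Fin (net.dims (k + 1)) // net.b k i ≠ 0})

/-- Size constraints on a ReLU network: depth at most `L`, widths at most `W`,
parameter magnitudes at most `κ`, at most `K` nonzero parameters. -/
def ReLUNet.HasSize {din dout : ℕ} (net : ReLUNet din dout)
    (W : ℕ) (κ : ℝ) (L K : ℕ) : Prop :=
  net.depth ≤ L ∧ (∀ k ≤ net.depth, net.dims k ≤ W) ∧
    (∀ k < net.depth, (∀ i j, |net.A k i j| ≤ κ) ∧ ∀ i, |net.b k i| ≤ κ) ∧
    net.sparsity ≤ K

/-- The class `𝓕(M_t, W, κ, L, K)` of conditional score networks,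
taking inputs `(x, y, t) ∈ ℝ^d × ℝ^{d_y} × ℝ` and values in `ℝ^d`. -/
def InScoreClass (d dy : ℕ) (M : ℝ → ℝ) (W : ℕ) (κ : ℝ) (L K : ℕ)
    (s : (Fin d → ℝ) → (Fin dy → ℝ) → ℝ → Fin d → ℝ) : Prop :=
  ∃ net : ReLUNet (d + dy + 1) d, net.HasSize W κ L K ∧
    (∀ x y t, s x y t = net.eval (Fin.append (Fin.append x y) ![t])) ∧
    ∀ t x y i, |s x y t i| ≤ M t

/-- The class of unconditional score networks, with inputs `(x, t)`. -/
def InScoreClass2 (d : ℕ) (M : ℝ → ℝ) (W : ℕ) (κ : ℝ) (L K : ℕ)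
    (s : (Fin d → ℝ) → ℝ → Fin d → ℝ) : Prop :=
  ∃ net : ReLUNet (d + 1) d, net.HasSize W κ L K ∧
    (∀ x t, s x t = net.eval (Fin.append x ![t])) ∧
    ∀ t x i, |s x t i| ≤ M t

/-- `α_t = e^{-t/2}`. -/
def alphaT (t : ℝ) : ℝ := Real.exp (-t / 2)

/-- `σ_t = √(1 - e^{-t})`. -/
def sigmaT (t : ℝ) : ℝ := Real.sqrt (1 - Real.exp (-t))

/-- The Gaussian transition kernel: the density of `N(α_t z, σ_t² I_d)` at `x`. -/
def gaussKernel (d : ℕ) (t : ℝ) (z x : Fin d → ℝ) : ℝ :=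
  (sigmaT t ^ d * (2 * Real.pi) ^ ((d : ℝ) / 2))⁻¹ *
    Real.exp (-(norm2 (fun i => alphaT t * z i - x i)) ^ 2 / (2 * sigmaT t ^ 2))

/-- The diffused conditional density `p_t(x|y)`. -/
def diffDensity (d dy : ℕ) (p : (Fin d → ℝ) → (Fin dy → ℝ) → ℝ) (t : ℝ)
    (x : Fin d → ℝ) (y : Fin dy → ℝ) : ℝ :=
  ∫ z : Fin d → ℝ, p z y * gaussKernel d t z x

/-- The conditional score `∇_x log p_t(x|y)`. -/
def score (d dy : ℕ) (p : (Fin d → ℝ) → (Fin dy → ℝ) → ℝ) (t : ℝ)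
    (x : Fin d → ℝ) (y : Fin dy → ℝ) : Fin d → ℝ :=
  fun i => fderiv ℝ (fun x' => Real.log (diffDensity d dy p t x' y)) x (Pi.single i 1)

/-- The partial derivative in the `i`-th coordinate direction. -/
def pderiv (D : ℕ) (i : Fin D) (f : (Fin D → ℝ) → ℝ) : (Fin D → ℝ) → ℝ :=
  fun x => fderiv ℝ f x (Pi.single i 1)

/-- The multi-index partial derivative `∂^k f`. -/
def multiDeriv (D : ℕ) (k : Fin D → ℕ) : ((Fin D → ℝ) → ℝ) → ((Fin D → ℝ) → ℝ) :=
  (List.ofFn fun i : Fin D => (pderiv D i)^[k i]).foldr (· ∘ ·) id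

/-- Membership in the Hölder ball `H^β(ℝ^D, B)`: `f` is `⌊β⌋`-times differentiable and
its Hölder norm is `< B`. -/
def MemHolderBall (D : ℕ) (β B : ℝ) (f : (Fin D → ℝ) → ℝ) : Prop :=
  ContDiff ℝ (⌊β⌋₊ : ℕ) f ∧
  ∃ b₁ b₂ : ℝ, b₁ + b₂ < B ∧
    (∀ k : Fin D → ℕ, (∑ i, k i) ≤ ⌊β⌋₊ → ∀ x, |multiDeriv D k f x| ≤ b₁) ∧
    (∀ k : Fin D → ℕ, (∑ i, k i) = ⌊β⌋₊ → ∀ x z, x ≠ z →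
      |multiDeriv D k f x - multiDeriv D k f z| ≤
        b₂ * normInf (x - z) ^ (β - (⌊β⌋₊ : ℝ)))

/-- `y ∈ [0,1]^{d_y}`. -/
def InUnitCube (dy : ℕ) (y : Fin dy → ℝ) : Prop := ∀ i, y i ∈ Set.Icc (0 : ℝ) 1

/-- Assumption (A1): `p(·|y)` is a conditional probability density, `(x,y) ↦ p(x|y)`
agrees on `ℝ^d × [0,1]^{d_y}` with a function in the Hölder ball `H^β(ℝ^{d+d_y}, B)`,
and `p(x|y) ≤ C₁ exp(-C₂‖x‖₂²/2)`. -/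
structure AssumptionA1 (d dy : ℕ) (β B C₁ C₂ : ℝ)
    (p : (Fin d → ℝ) → (Fin dy → ℝ) → ℝ) : Prop where
  beta_pos : 0 < β
  B_pos : 0 < B
  C1_pos : 0 < C₁
  C2_pos : 0 < C₂
  nonneg : ∀ x y, InUnitCube dy y → 0 ≤ p x y
  total_mass : ∀ y, InUnitCube dy y → (∫ x, p x y) = 1
  holder : ∃ q : (Fin (d + dy) → ℝ) → ℝ, MemHolderBall (d + dy) β B q ∧
    ∀ (x : Fin d → ℝ) (y : Fin dy → ℝ), InUnitCube dy y → p x y = q (Fin.append x y)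
  tail : ∀ x y, InUnitCube dy y → p x y ≤ C₁ * Real.exp (-C₂ * norm2 x ^ 2 / 2)

/-- The conditional density of Assumption (A2): `p(x|y) = exp(-C₂‖x‖₂²/2)·f(x,y)`. -/
def densityA2 (d dy : ℕ) (C₂ : ℝ) (f : (Fin d → ℝ) → (Fin dy → ℝ) → ℝ) :
    (Fin d → ℝ) → (Fin dy → ℝ) → ℝ :=
  fun x y => Real.exp (-C₂ * norm2 x ^ 2 / 2) * f x y

/-- Assumption (A2): `p(x|y) = exp(-C₂‖x‖₂²/2)·f(x,y)` is a conditional probability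
density, where `f` agrees on `ℝ^d × [0,1]^{d_y}` with a function in the Hölder ball
`H^β(ℝ^{d+d_y}, B)` and `f ≥ C > 0`. -/
structure AssumptionA2 (d dy : ℕ) (β B C C₂ : ℝ)
    (f : (Fin d → ℝ) → (Fin dy → ℝ) → ℝ) : Prop where
  beta_pos : 0 < β
  B_pos : 0 < B
  C_pos : 0 < C
  C2_pos : 0 < C₂
  holder : ∃ q : (Fin (d + dy) → ℝ) → ℝ, MemHolderBall (d + dy) β B q ∧
    ∀ (x : Fin d → ℝ) (y : Fin dy → ℝ), InUnitCube dy y → f x y = q (Fin.append x y)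
  lower : ∀ x y, InUnitCube dy y → C ≤ f x y
  total_mass : ∀ y, InUnitCube dy y → (∫ x, densityA2 d dy C₂ f x y) = 1

/-- `σ̂_t = σ_t/√(α_t² + C₂σ_t²)`. -/
def sigmaHat (C₂ t : ℝ) : ℝ := sigmaT t / Real.sqrt (alphaT t ^ 2 + C₂ * sigmaT t ^ 2)

/-- `α̂_t = α_t/(α_t² + C₂σ_t²)`. -/
def alphaHat (C₂ t : ℝ) : ℝ := alphaT t / (alphaT t ^ 2 + C₂ * sigmaT t ^ 2)

/-- `h(x,y,t) = ∫ f(z,y) (2π)^{-d/2} σ̂_t^{-d} exp(-‖z - α̂_t x‖²/(2σ̂_t²)) dz`. -/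
def hFun (d dy : ℕ) (C₂ : ℝ) (f : (Fin d → ℝ) → (Fin dy → ℝ) → ℝ) (t : ℝ)
    (x : Fin d → ℝ) (y : Fin dy → ℝ) : ℝ :=
  ∫ z : Fin d → ℝ, f z y * ((2 * Real.pi) ^ ((d : ℝ) / 2) * sigmaHat C₂ t ^ d)⁻¹ *
    Real.exp (-(norm2 (fun i => z i - alphaHat C₂ t * x i)) ^ 2 / (2 * sigmaHat C₂ t ^ 2))

/-- The total variation distance between two measures. -/
def tvDist {α : Type*} [MeasurableSpace α] (μ ν : Measure α) : ℝ :=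
  ⨆ A : {A : Set α // MeasurableSet A}, |(μ A.1).toReal - (ν A.1).toReal|

/-- The classifier-free guidance loss `ℓ(x,y;s)`. -/
def cfLoss (d dy : ℕ) (t₀ T : ℝ)
    (s₁ : (Fin d → ℝ) → (Fin dy → ℝ) → ℝ → Fin d → ℝ)
    (s₂ : (Fin d → ℝ) → ℝ → Fin d → ℝ)
    (x : Fin d → ℝ) (y : Fin dy → ℝ) : ℝ :=
  ∫ t in t₀..T, (T - t₀)⁻¹ *
    ∫ x' : Fin d → ℝ, gaussKernel d t x x' *
      ((1 / 2) * norm2 (fun i => s₁ x' y t i + (x' i - alphaT t * x i) / sigmaT t ^ 2) ^ 2 +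
       (1 / 2) * norm2 (fun i => s₂ x' t i + (x' i - alphaT t * x i) / sigmaT t ^ 2) ^ 2)

/-- The empirical classifier-free risk `𝓛̂(s)` on a sample of size `n`. -/
def empRisk (d dy n : ℕ) (t₀ T : ℝ)
    (s₁ : (Fin d → ℝ) → (Fin dy → ℝ) → ℝ → Fin d → ℝ)
    (s₂ : (Fin d → ℝ) → ℝ → Fin d → ℝ)
    (ω : Fin n → (Fin d → ℝ) × (Fin dy → ℝ)) : ℝ :=
  (n : ℝ)⁻¹ * ∑ i, cfLoss d dy t₀ T s₁ s₂ (ω i).1 (ω i).2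

/-- The conditional score risk `𝓡(s₁)`. -/
def condRisk (d dy : ℕ) (p : (Fin d → ℝ) → (Fin dy → ℝ) → ℝ)
    (Py : Measure (Fin dy → ℝ)) (t₀ T : ℝ)
    (s₁ : (Fin d → ℝ) → (Fin dy → ℝ) → ℝ → Fin d → ℝ) : ℝ :=
  ∫ t in t₀..T, (T - t₀)⁻¹ *
    ∫ y, (∫ x : Fin d → ℝ,
      norm2 (fun i => s₁ x y t i - score d dy p t x y i) ^ 2 *
        diffDensity d dy p t x y) ∂Py

/-- The density class `𝓟` of Proposition 4.5. -/
def PClass (d : ℕ) (β B C C₂ : ℝ) : Set ((Fin d → ℝ) → ℝ) :=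
  {p | (∀ x, 0 ≤ p x) ∧ (∫ x, p x) = 1 ∧
    ∃ f : (Fin d → ℝ) → ℝ, MemHolderBall d β B f ∧ (∀ x, C ≤ f x) ∧
      ∀ x, p x = f x * Real.exp (-C₂ * norm2 x ^ 2)}

open Real

lemma abs_pow_le_exp (k : ℕ) (u : ℝ) : |u| ^ k ≤ exp (2 * k ^ 2 + u ^ 2 / 8) :=
  calc |u| ^ k ≤ exp |u| ^ k := by gcongr; linarith [add_one_le_exp |u|]
    _ = exp (k * |u|) := by rw [← exp_nat_mul]
    _ ≤ exp (2 * k ^ 2 + u ^ 2 / 8) := by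
      gcongr; nlinarith [sq_nonneg (2 * (k : ℝ) - |u| / 2), sq_abs u]

lemma abs_prod_pow_le_exp {ι : Type*} [Fintype ι] (u : ι → ℝ) {v : ι → ℕ} {n : ℕ}
    (hv : ∑ i, v i ≤ n) : |∏ i, u i ^ v i| ≤ exp (2 * n ^ 2 + (∑ i, u i ^ 2) / 8) := by
  have hsq : ∑ i, (v i : ℝ) ^ 2 ≤ (n : ℝ) ^ 2 :=
    calc ∑ i, (v i : ℝ) ^ 2 ≤ (∑ i, (v i : ℝ)) ^ 2 :=
          Finset.sum_sq_le_sq_sum_of_nonneg fun i _ => Nat.cast_nonneg _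
      _ ≤ (n : ℝ) ^ 2 := by gcongr; exact_mod_cast hv
  calc |∏ i, u i ^ v i| = ∏ i, |u i| ^ v i := by simp only [Finset.abs_prod, abs_pow]
    _ ≤ ∏ i, exp (2 * (v i : ℝ) ^ 2 + u i ^ 2 / 8) :=
        Finset.prod_le_prod (fun i _ => by positivity) fun i _ => abs_pow_le_exp _ _
    _ = exp (2 * ∑ i, (v i : ℝ) ^ 2 + (∑ i, u i ^ 2) / 8) := by
        rw [← exp_sum, Finset.sum_add_distrib, Finset.mul_sum, Finset.sum_div]
    _ ≤ exp (2 * n ^ 2 + (∑ i, u i ^ 2) / 8) := by gcongr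

lemma integral_exp_neg_mul_sq_sub (a m : ℝ) : ∫ s, exp (-a * (s - m) ^ 2) = √(π / a) :=
  (integral_sub_right_eq_self (fun s => exp (-a * s ^ 2)) m).trans (integral_gaussian a)

lemma mul_sq_sub_le_mul_sq_add_mul_sq {p q : ℝ} (hp : 0 ≤ p) (hq : 0 ≤ q) (hpq : 0 < p + q)
    (r s : ℝ) : (p + q) * (s - q * r / (p + q)) ^ 2 ≤ p * s ^ 2 + q * (s - r) ^ 2 := by
  have h : p * s ^ 2 + q * (s - r) ^ 2 - (p + q) * (s - q * r / (p + q)) ^ 2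
      = p * q * r ^ 2 / (p + q) := by
    field_simp
    ring
  have : 0 ≤ p * q * r ^ 2 / (p + q) := by positivity
  linarith

def coordWeight (C α σ b s : ℝ) : ℝ := exp (-(C * s ^ 2 / 4 + ((α * s - b) / σ) ^ 2 / 8))

lemma integrable_coordWeight {C : ℝ} (hC : 0 < C) (α σ b : ℝ) :
    Integrable (coordWeight C α σ b) := by
  refine (integrable_exp_neg_mul_sq (by positivity : 0 < C / 4)).mono'
    (by unfold coordWeight; fun_prop) (ae_of_all _ fun s => ?_)
  rw [coordWeight, norm_of_nonneg (exp_pos _).le]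
  gcongr
  nlinarith [sq_nonneg ((α * s - b) / σ)]

lemma integral_coordWeight_le {C α σ : ℝ} (hC : 0 < C) (hα : 0 < α) (hσ : 0 < σ)
    (hασ : α ^ 2 + σ ^ 2 = 1) (b : ℝ) :
    ∫ s, coordWeight C α σ b s ≤ σ * √(2 * π) * √(4 / min C 1) := by
  set p := C / 4 with hp
  set q := α ^ 2 / (8 * σ ^ 2) with hq
  have hpq : 0 < p + q := by positivity
  have hm : 0 < min C 1 := lt_min hC one_pos
  have hle : ∀ s, coordWeight C α σ b s ≤ exp (-(p + q) * (s - q * (b / α) / (p + q)) ^ 2) := by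
    intro s
    have h := mul_sq_sub_le_mul_sq_add_mul_sq (by positivity) (by positivity) hpq (b / α) s
    have e : C * s ^ 2 / 4 + ((α * s - b) / σ) ^ 2 / 8 = p * s ^ 2 + q * (s - b / α) ^ 2 := by
      rw [hp, hq]
      field_simp
    rw [coordWeight, e]
    gcongr
    linarith
  have hprec : min C 1 ≤ 8 * σ ^ 2 * (p + q) := by
    have e : 8 * σ ^ 2 * (p + q) = 2 * C * σ ^ 2 + α ^ 2 := by
      rw [hp, hq]
      field_simp
      ring
    nlinarith [min_le_left C 1, min_le_right C 1, sq_nonneg σ, sq_nonneg α]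
  calc ∫ s, coordWeight C α σ b s ≤ ∫ s, exp (-(p + q) * (s - q * (b / α) / (p + q)) ^ 2) :=
        integral_mono (integrable_coordWeight hC α σ b)
          ((integrable_exp_neg_mul_sq hpq).comp_sub_right _) hle
    _ = √(π / (p + q)) := integral_exp_neg_mul_sq_sub _ _
    _ ≤ √(σ ^ 2 * (2 * π) * (4 / min C 1)) := by
        gcongr
        have h1 : 1 ≤ 8 * σ ^ 2 * (p + q) / min C 1 := by rwa [le_div_iff₀ hm, one_mul]
        rw [div_le_iff₀ hpq, show σ ^ 2 * (2 * π) * (4 / min C 1) * (p + q)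
          = π * (8 * σ ^ 2 * (p + q) / min C 1) by ring]
        exact le_mul_of_one_le_right pi_pos.le h1
    _ = σ * √(2 * π) * √(4 / min C 1) := by
        rw [sqrt_mul (by positivity), sqrt_mul (sq_nonneg σ), sqrt_sq hσ.le]

lemma integral_prod_coordWeight_le {d : ℕ} {C α σ : ℝ} (hC : 0 < C) (hα : 0 < α) (hσ : 0 < σ)
    (hασ : α ^ 2 + σ ^ 2 = 1) (x : Fin d → ℝ) :
    (σ * √(2 * π))⁻¹ ^ d * ∫ z : Fin d → ℝ, ∏ i, coordWeight C α σ (x i) (z i)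
      ≤ √(4 / min C 1) ^ d := by
  rw [integral_fintype_prod_volume_eq_prod]
  calc (σ * √(2 * π))⁻¹ ^ d * ∏ i, ∫ s, coordWeight C α σ (x i) s
      = ∏ i, (σ * √(2 * π))⁻¹ * ∫ s, coordWeight C α σ (x i) s := by
        rw [Finset.prod_mul_distrib, Finset.prod_const, Finset.card_univ, Fintype.card_fin]
    _ ≤ ∏ _i : Fin d, √(4 / min C 1) := by
        refine Finset.prod_le_prod (fun i _ => ?_) fun i _ => ?_
        · exact mul_nonneg (by positivity)
            (integral_nonneg fun s => (exp_pos _).le)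
        · rw [inv_mul_le_iff₀ (by positivity)]
          exact integral_coordWeight_le hC hα hσ hασ (x i)
    _ = √(4 / min C 1) ^ d := by
        rw [Finset.prod_const, Finset.card_univ, Fintype.card_fin]

lemma alphaT_sq_add_sigmaT_sq {t : ℝ} (ht : 0 ≤ t) : alphaT t ^ 2 + sigmaT t ^ 2 = 1 := by
  rw [alphaT, sigmaT, sq_sqrt (by linarith [exp_le_one_iff.mpr (neg_nonpos.mpr ht)]),
    ← exp_nat_mul]
  ring_nf

lemma sigmaT_pos {t : ℝ} (ht : 0 < t) : 0 < sigmaT t :=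
  sqrt_pos.mpr (by linarith [exp_lt_one_iff.mpr (neg_lt_zero.mpr ht)])

lemma gaussKernel_eq (d : ℕ) (t : ℝ) (z x : Fin d → ℝ) :
    gaussKernel d t z x = (sigmaT t * √(2 * π))⁻¹ ^ d *
      exp (-(∑ i, ((alphaT t * z i - x i) / sigmaT t) ^ 2) / 2) := by
  have hpow : (2 * π) ^ ((d : ℝ) / 2) = √(2 * π) ^ d := by
    rw [sqrt_eq_rpow, ← rpow_natCast, ← rpow_mul (by positivity)]
    ring_nf
  simp only [gaussKernel, norm2, div_pow, ← Finset.sum_div]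
  rw [sq_sqrt (Finset.sum_nonneg fun i _ => sq_nonneg _), hpow, ← mul_pow, inv_pow]
  congr 2
  ring

def clipBox {d : ℕ} (t R : ℝ) (x : Fin d → ℝ) : Set (Fin d → ℝ) :=
  {z | ∀ i, ((x i - sigmaT t * R) / alphaT t ≤ z i ∧ z i ≤ (x i + sigmaT t * R) / alphaT t) ∧
    (-R ≤ z i ∧ z i ≤ R)}

lemma measurableSet_clipBox {d : ℕ} (t R : ℝ) (x : Fin d → ℝ) :
    MeasurableSet (clipBox t R x) := by
  unfold clipBox
  measurability

lemma exists_sq_le_of_notMem_clipBox {d : ℕ} {t R : ℝ} (ht : 0 < t) (hR : 0 ≤ R)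
    {x z : Fin d → ℝ} (hz : z ∉ clipBox t R x) :
    ∃ i, R ^ 2 ≤ z i ^ 2 ∨ R ^ 2 ≤ ((alphaT t * z i - x i) / sigmaT t) ^ 2 := by
  have hα : 0 < alphaT t := exp_pos _
  have hσ := sigmaT_pos ht
  simp only [clipBox, Set.mem_ofPred_eq, not_forall] at hz
  obtain ⟨i, hi⟩ := hz
  refine ⟨i, ?_⟩
  by_contra! hlt
  obtain ⟨hz₁, hz₂⟩ := abs_lt.mp (abs_lt_of_sq_lt_sq hlt.1 hR)
  obtain ⟨hu₁, hu₂⟩ := abs_lt.mp (abs_lt_of_sq_lt_sq hlt.2 hR)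
  rw [lt_div_iff₀ hσ] at hu₁
  rw [div_lt_iff₀ hσ] at hu₂
  refine hi ⟨⟨?_, ?_⟩, hz₁.le, hz₂.le⟩
  · rw [div_le_iff₀ hα]
    linarith
  · rw [le_div_iff₀ hα]
    linarith

lemma integrand_le_of_exists_sq_le {d n : ℕ} {C₁ C₂ t R P : ℝ} (hC₂ : 0 < C₂)
    {v : Fin d → ℕ} (hv : ∑ i, v i ≤ n) {x z : Fin d → ℝ}
    (hP₀ : 0 ≤ P) (hP : P ≤ C₁ * exp (-C₂ * norm2 z ^ 2 / 2))
    (hz : ∃ i, R ^ 2 ≤ z i ^ 2 ∨ R ^ 2 ≤ ((alphaT t * z i - x i) / sigmaT t) ^ 2) :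
    |∏ i, ((alphaT t * z i - x i) / sigmaT t) ^ v i| * (P * gaussKernel d t z x)
      ≤ C₁ * exp (2 * n ^ 2) * exp (-(min C₂ 1 / 4 * R ^ 2)) *
        ((sigmaT t * √(2 * π))⁻¹ ^ d * ∏ i, coordWeight C₂ (alphaT t) (sigmaT t) (x i) (z i)) := by
  set u : Fin d → ℝ := fun i => (alphaT t * z i - x i) / sigmaT t
  set Z := ∑ i, z i ^ 2
  set U := ∑ i, u i ^ 2
  set c₀ := (sigmaT t * √(2 * π))⁻¹ ^ d
  have hc₀ : 0 ≤ c₀ := by have : 0 ≤ sigmaT t := sqrt_nonneg _; positivity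
  have hZ : 0 ≤ Z := Finset.sum_nonneg fun i _ => sq_nonneg _
  have hU : 0 ≤ U := Finset.sum_nonneg fun i _ => sq_nonneg _
  have hPZ : P ≤ C₁ * exp (-(C₂ * Z) / 2) := by rwa [norm2, sq_sqrt hZ, neg_mul] at hP
  have hC₁ : 0 ≤ C₁ := nonneg_of_mul_nonneg_left (hP₀.trans hPZ) (exp_pos _)
  have hgap : min C₂ 1 / 4 * R ^ 2 ≤ C₂ * Z / 4 + U / 4 := by
    obtain ⟨i, hi⟩ := hz
    have hzi : z i ^ 2 ≤ Z := Finset.single_le_sum (fun j _ => sq_nonneg (z j)) (Finset.mem_univ i)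
    have hui : u i ^ 2 ≤ U := Finset.single_le_sum (fun j _ => sq_nonneg (u j)) (Finset.mem_univ i)
    have hm₁ : min C₂ 1 ≤ C₂ := min_le_left C₂ 1
    have hm₂ : min C₂ 1 ≤ 1 := min_le_right C₂ 1
    have hm₀ : 0 ≤ min C₂ 1 := le_min hC₂.le zero_le_one
    rcases hi with hi | hi
    · nlinarith [mul_le_mul hm₁ (hi.trans hzi) (sq_nonneg R) hC₂.le]
    · nlinarith [mul_le_mul_of_nonneg_left (hi.trans hui) hm₀]
  have hprod : ∏ i, coordWeight C₂ (alphaT t) (sigmaT t) (x i) (z i)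
      = exp (-(C₂ * Z / 4 + U / 8)) := by
    simp only [coordWeight, ← exp_sum, Finset.sum_neg_distrib, Finset.sum_add_distrib,
      ← Finset.sum_div, ← Finset.mul_sum]
    rfl
  -- an eighth of the kernel's exponent pays for the monomial; of the rest, half yields the gap
  have hsplit : exp (2 * n ^ 2 + U / 8) * exp (-(C₂ * Z) / 2) * exp (-U / 2)
      = exp (2 * n ^ 2) * exp (-(C₂ * Z / 4 + U / 4)) * exp (-(C₂ * Z / 4 + U / 8)) := by
    simp only [← exp_add]
    ring_nf
  calc |∏ i, u i ^ v i| * (P * gaussKernel d t z x)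
      ≤ exp (2 * n ^ 2 + U / 8) * (C₁ * exp (-(C₂ * Z) / 2) * (c₀ * exp (-U / 2))) := by
        rw [gaussKernel_eq]
        exact mul_le_mul (abs_prod_pow_le_exp u hv)
          (mul_le_mul_of_nonneg_right hPZ (by positivity)) (by positivity) (exp_pos _).le
    _ = C₁ * exp (2 * n ^ 2) * exp (-(C₂ * Z / 4 + U / 4)) * (c₀ * exp (-(C₂ * Z / 4 + U / 8))) := by
        linear_combination C₁ * c₀ * hsplit
    _ ≤ C₁ * exp (2 * n ^ 2) * exp (-(min C₂ 1 / 4 * R ^ 2)) *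
        (c₀ * ∏ i, coordWeight C₂ (alphaT t) (sigmaT t) (x i) (z i)) := by
        rw [hprod]
        gcongr

theorem setIntegral_compl_clipBox_le {d n : ℕ} {C₁ C₂ t R : ℝ} (hC₂ : 0 < C₂) (ht : 0 < t)
    (hR : 0 ≤ R) {v : Fin d → ℕ} (hv : ∑ i, v i ≤ n) {P : (Fin d → ℝ) → ℝ}
    (hP₀ : ∀ z, 0 ≤ P z) (hP : ∀ z, P z ≤ C₁ * exp (-C₂ * norm2 z ^ 2 / 2)) (x : Fin d → ℝ) :
    ∫ z in (clipBox t R x)ᶜ,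
        |∏ i, ((alphaT t * z i - x i) / sigmaT t) ^ v i| * (P z * gaussKernel d t z x)
      ≤ C₁ * exp (2 * n ^ 2) * √(4 / min C₂ 1) ^ d * exp (-(min C₂ 1 / 4 * R ^ 2)) := by
  have hσ := sigmaT_pos ht
  have hC₁ : 0 ≤ C₁ := nonneg_of_mul_nonneg_left ((hP₀ 0).trans (hP 0)) (exp_pos _)
  set c₀ := (sigmaT t * √(2 * π))⁻¹ ^ d
  set K := C₁ * exp (2 * n ^ 2) * exp (-(min C₂ 1 / 4 * R ^ 2))
  set g : (Fin d → ℝ) → ℝ := fun z => ∏ i, coordWeight C₂ (alphaT t) (sigmaT t) (x i) (z i)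
  have hg : Integrable g := Integrable.fintype_prod fun i => integrable_coordWeight hC₂ _ _ _
  have hg₀ : ∀ z, 0 ≤ K * (c₀ * g z) := fun z => by
    have : 0 ≤ g z := Finset.prod_nonneg fun i _ => (exp_pos _).le
    positivity
  calc ∫ z in (clipBox t R x)ᶜ,
        |∏ i, ((alphaT t * z i - x i) / sigmaT t) ^ v i| * (P z * gaussKernel d t z x)
      ≤ ∫ z in (clipBox t R x)ᶜ, K * (c₀ * g z) := by
        refine integral_mono_of_nonneg (ae_of_all _ fun z => ?_)
          ((hg.const_mul _).const_mul _).integrableOn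
          (ae_restrict_of_forall_mem (measurableSet_clipBox t R x).compl fun z hz =>
            integrand_le_of_exists_sq_le hC₂ hv (hP₀ z) (hP z)
              (exists_sq_le_of_notMem_clipBox ht hR hz))
        have hk : 0 ≤ gaussKernel d t z x := by
          rw [gaussKernel_eq]
          have := hσ.le
          positivity
        exact mul_nonneg (abs_nonneg _) (mul_nonneg (hP₀ z) hk)
    _ ≤ ∫ z, K * (c₀ * g z) := setIntegral_le_integral ((hg.const_mul _).const_mul _)
        (ae_of_all _ hg₀)
    _ = K * (c₀ * ∫ z, g z) := by rw [integral_const_mul, integral_const_mul]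
    _ ≤ K * √(4 / min C₂ 1) ^ d := by
        gcongr
        exact integral_prod_coordWeight_le hC₂ (exp_pos _) hσ (alphaT_sq_add_sigmaT_sq ht.le) x
    _ = C₁ * exp (2 * n ^ 2) * √(4 / min C₂ 1) ^ d * exp (-(min C₂ 1 / 4 * R ^ 2)) := by ring

lemma mul_exp_neg_mul_le_exp_neg {K c L : ℝ} (hL : 1 ≤ L) (hc : 1 + max (log K) 0 ≤ c) :
    K * exp (-(c * L)) ≤ exp (-L) := by
  have hK : K ≤ exp (max (log K) 0) := (le_exp_log K).trans (exp_le_exp.mpr (le_max_left _ _))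
  calc K * exp (-(c * L)) ≤ exp (max (log K) 0) * exp (-(c * L)) := by gcongr
    _ = exp (max (log K) 0 - c * L) := by rw [← exp_add, sub_eq_add_neg]
    _ ≤ exp (-L) := by
        gcongr
        nlinarith [le_max_right (log K) 0]

theorem statement8_general
    (d : ℕ) (n : ℕ) (C₁ C₂ : ℝ) :
    ∃ Cnd : ℝ, 1 ≤ Cnd ∧
      ∀ dy : ℕ, 1 ≤ dy →
        ∀ (β B : ℝ) (p : (Fin d → ℝ) → (Fin dy → ℝ) → ℝ),
          AssumptionA1 d dy β B C₁ C₂ p →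
          ∀ v : Fin d → ℕ, (∑ i, v i) ≤ n →
            ∀ (x : Fin d → ℝ) (y : Fin dy → ℝ), InUnitCube dy y →
              ∀ t : ℝ, 0 < t → ∀ ε : ℝ, 0 < ε → ε ≤ 1 / Real.exp 1 →
                (∫ z in {z : Fin d → ℝ | ∀ i,
                    ((x i - sigmaT t * (Cnd * Real.sqrt (Real.log ε⁻¹))) / alphaT t ≤ z i ∧
                      z i ≤ (x i + sigmaT t * (Cnd * Real.sqrt (Real.log ε⁻¹))) / alphaT t) ∧
                    (-(Cnd * Real.sqrt (Real.log ε⁻¹)) ≤ z i ∧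
                      z i ≤ Cnd * Real.sqrt (Real.log ε⁻¹))}ᶜ,
                  |∏ i, ((alphaT t * z i - x i) / sigmaT t) ^ v i| *
                    (p z y * gaussKernel d t z x))
                  ≤ ε := by
  set c := min C₂ 1 / 4
  set K := C₁ * exp (2 * n ^ 2) * √(4 / min C₂ 1) ^ d
  set a := 1 + max (log K) 0
  refine ⟨max 1 √(a / c), le_max_left _ _, ?_⟩
  intro dy _ β B p hp v hv x y hy t ht ε hε hεe
  have hc : 0 < c := by have := hp.C2_pos; positivity
  have ha : a ≤ c * (max 1 √(a / c)) ^ 2 := by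
    rw [← div_le_iff₀' hc]
    calc a / c = √(a / c) ^ 2 := (sq_sqrt (by positivity)).symm
      _ ≤ (max 1 √(a / c)) ^ 2 := by gcongr; exact le_max_right _ _
  have hL : 1 ≤ log ε⁻¹ := by
    rwa [le_log_iff_exp_le (by positivity), le_inv_comm₀ (exp_pos 1) hε, ← one_div]
  calc _ ≤ K * exp (-(c * (max 1 √(a / c) * √(log ε⁻¹)) ^ 2)) :=
        setIntegral_compl_clipBox_le hp.C2_pos ht (by positivity) hv (fun z => hp.nonneg z y hy)
          (fun z => hp.tail z y hy) x
    _ ≤ exp (-log ε⁻¹) := by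
        rw [mul_pow, sq_sqrt (by linarith), ← mul_assoc]
        exact mul_exp_neg_mul_le_exp_neg hL ha
    _ = ε := by rw [log_inv, neg_neg, exp_log hε]

/-- Lemma A.7: clipping the integral defining `p_t` to a bounded
region, under Assumption (A1). -/
theorem statement8
    (d : ℕ) (hd : 1 ≤ d) (n : ℕ) (C₁ C₂ : ℝ) (hC₁ : 0 < C₁) (hC₂ : 0 < C₂) :
    ∃ Cnd : ℝ, 1 ≤ Cnd ∧
      ∀ dy : ℕ, 1 ≤ dy →
        ∀ (β B : ℝ) (p : (Fin d → ℝ) → (Fin dy → ℝ) → ℝ),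
          AssumptionA1 d dy β B C₁ C₂ p →
          ∀ v : Fin d → ℕ, (∑ i, v i) ≤ n →
            ∀ (x : Fin d → ℝ) (y : Fin dy → ℝ), InUnitCube dy y →
              ∀ t : ℝ, 0 < t → ∀ ε : ℝ, 0 < ε → ε ≤ 1 / Real.exp 1 →
                (∫ z in {z : Fin d → ℝ | ∀ i,
                    ((x i - sigmaT t * (Cnd * Real.sqrt (Real.log ε⁻¹))) / alphaT t ≤ z i ∧
                      z i ≤ (x i + sigmaT t * (Cnd * Real.sqrt (Real.log ε⁻¹))) / alphaT t) ∧
                    (-(Cnd * Real.sqrt (Real.log ε⁻¹)) ≤ z i ∧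
                      z i ≤ Cnd * Real.sqrt (Real.log ε⁻¹))}ᶜ,
                  |∏ i, ((alphaT t * z i - x i) / sigmaT t) ^ v i| *
                    (p z y * gaussKernel d t z x))
                  ≤ ε :=
  statement8_general d n C₁ C₂

end CDM
end
end

section
/- Suppose Assumption (A2) holds and let n ∈ ℕ. Then there exists a constant C(n,d) > 0, depending only on n, d and B, such that for every multi-index v ∈ ℕ^d with ‖v‖₁ ≤ n, every x ∈ ℝ^d, every y ∈ [0,1]^{d_y}, every t > 0 and every 0 < ε < 0.99: | ∫_{ℝ^d} ((z − α̂_t x)/σ̂_t)^v · f(z,y) · (2π)^{−d/2} σ̂_t^{−d} exp(−‖z − α̂_t x‖₂²/(2σ̂_t²)) dz − ∫_{B_x} ((z − α̂_t x)/σ̂_t)^v · f(z,y) · (2π)^{−d/2} σ̂_t^{−d} exp(−‖z − α̂_t x‖₂²/(2σ̂_t²)) dz | ≤ ε, where B_x = ∏_{i=1}^d [ α̂_t x_i − C(n,d) σ̂_t √(log ε^{−1}), α̂_t x_i + C(n,d) σ̂_t √(log ε^{−1}) ] and w^v = ∏_i w_i^{v_i}. -/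
/-! After the substitution `w = (z - α̂_t x) / σ̂_t` the integrand is bounded by `B (1 + ‖w‖₂)ⁿ`
times the standard Gaussian density, since the Hölder ball bounds `|f|` by `B`. Off the cube `B_x`
one has `‖w‖₂ ≥ C √(log ε⁻¹)`, so half of the Gaussian exponent gives the factor
`e^{-C² log ε⁻¹ / 4}`, while `(1 + r)ⁿ ≤ e^{2n²} e^{r²/8}` leaves the integrable majorant
`e^{-‖w‖₂²/8}` from the other half. The tail is therefore at most
`B e^{2n²} (∫ e^{-‖w‖₂²/8}) e^{-C² log ε⁻¹ / 4}`, which is at most `ε` for all `ε < 0.99` once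
`C` is large enough. -/

open MeasureTheory

noncomputable section

namespace CDM

open Real

section Norm2

variable {n : ℕ}

lemma norm2_nonneg (x : Fin n → ℝ) : 0 ≤ norm2 x := Real.sqrt_nonneg _

lemma sq_norm2 (x : Fin n → ℝ) : norm2 x ^ 2 = ∑ i, x i ^ 2 :=
  Real.sq_sqrt (Finset.sum_nonneg fun _ _ => sq_nonneg _)

lemma abs_le_norm2 (x : Fin n → ℝ) (i : Fin n) : |x i| ≤ norm2 x := by
  rw [← Real.sqrt_sq_eq_abs]
  exact Real.sqrt_le_sqrt
    (Finset.single_le_sum (fun j _ => sq_nonneg (x j)) (Finset.mem_univ i))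

lemma dist_le_norm2_sub (z μ : Fin n → ℝ) : dist z μ ≤ norm2 (z - μ) :=
  (dist_pi_le_iff (norm2_nonneg _)).2 fun i => by
    simpa [Real.dist_eq] using abs_le_norm2 (z - μ) i

lemma norm2_smul (c : ℝ) (x : Fin n → ℝ) : norm2 (c • x) = |c| * norm2 x := by
  simp only [norm2, Pi.smul_apply, smul_eq_mul, mul_pow, ← Finset.mul_sum]
  rw [Real.sqrt_mul (sq_nonneg c), Real.sqrt_sq_eq_abs]

@[fun_prop]
lemma continuous_norm2 : Continuous (norm2 : (Fin n → ℝ) → ℝ) := by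
  unfold norm2; fun_prop

lemma integrable_exp_neg_mul_norm2_sq {b : ℝ} (hb : 0 < b) :
    Integrable fun w : Fin n → ℝ => exp (-b * norm2 w ^ 2) := by
  simp only [sq_norm2, Finset.mul_sum, Real.exp_sum]
  exact Integrable.fintype_prod (f := fun _ u => exp (-b * u ^ 2))
    fun _ => integrable_exp_neg_mul_sq hb

lemma abs_prod_pow_le_one_add_norm2_pow (w : Fin n → ℝ) {v : Fin n → ℕ} {m : ℕ}
    (hv : ∑ i, v i ≤ m) : |∏ i, w i ^ v i| ≤ (1 + norm2 w) ^ m := by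
  have h1 : 1 ≤ 1 + norm2 w := le_add_of_nonneg_right (norm2_nonneg w)
  calc |∏ i, w i ^ v i| = ∏ i, |w i| ^ v i := by simp only [Finset.abs_prod, abs_pow]
    _ ≤ ∏ i, (1 + norm2 w) ^ v i := by
      gcongr with i
      exact (abs_le_norm2 w i).trans (le_add_of_nonneg_left zero_le_one)
    _ = (1 + norm2 w) ^ ∑ i, v i := Finset.prod_pow_eq_pow_sum _ _ _
    _ ≤ (1 + norm2 w) ^ m := pow_le_pow_right₀ h1 hv

end Norm2

lemma one_add_pow_mul_exp_le {m : ℕ} {ρ r : ℝ} (hρ : 0 ≤ ρ) (hρr : ρ ≤ r) :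
    (1 + r) ^ m * exp (-r ^ 2 / 2) ≤
      exp (2 * m ^ 2) * exp (-ρ ^ 2 / 4) * exp (-(1 / 8) * r ^ 2) := by
  -- `1 + r ≤ eʳ` and `m r ≤ 2 m² + r² / 8`; the rest of `r² / 2` pays for `ρ² / 4`
  have hpow : (1 + r) ^ m ≤ exp (m * r) := by
    rw [Real.exp_nat_mul]
    gcongr
    · linarith
    · linarith [Real.add_one_le_exp r]
  calc (1 + r) ^ m * exp (-r ^ 2 / 2) ≤ exp (m * r) * exp (-r ^ 2 / 2) := by gcongr
    _ ≤ exp (2 * m ^ 2) * exp (-ρ ^ 2 / 4) * exp (-(1 / 8) * r ^ 2) := by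
      simp only [← Real.exp_add]
      apply Real.exp_le_exp.2
      nlinarith [sq_nonneg (r - 4 * m), mul_le_mul hρr hρr hρ (hρ.trans hρr)]

lemma multiDeriv_zero (D : ℕ) (f : (Fin D → ℝ) → ℝ) : multiDeriv D 0 f = f := by
  have h : ∀ k : ℕ, (List.replicate k id).foldr (· ∘ ·) id f = f := by
    intro k; induction k <;> simp_all [List.replicate_succ]
  simpa [multiDeriv] using h D

lemma MemHolderBall.abs_le {D : ℕ} (hD : 0 < D) {β B : ℝ} {q : (Fin D → ℝ) → ℝ}
    (hq : MemHolderBall D β B q) (x : Fin D → ℝ) : |q x| ≤ B := by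
  obtain ⟨-, b₁, b₂, hb, hsup, hholder⟩ := hq
  -- the Hölder seminorm bound at two points at sup-distance one forces `0 ≤ b₂`
  have hb₂ : 0 ≤ b₂ := by
    let i₀ : Fin D := ⟨0, hD⟩
    have hne : (0 : Fin D → ℝ) ≠ 1 := fun h => zero_ne_one (congrFun h i₀)
    have h := hholder (Pi.single i₀ ⌊β⌋₊) (by simp) 0 1 hne
    have hdist : normInf ((0 : Fin D → ℝ) - 1) = 1 := by
      have : Nonempty (Fin D) := ⟨i₀⟩
      simp [normInf]
    rw [hdist, Real.one_rpow, mul_one] at h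
    exact (abs_nonneg _).trans h
  have h := hsup 0 (by simp) x
  rw [multiDeriv_zero] at h
  linarith

section AssumptionA2

variable {d dy : ℕ} {β B C C₂ : ℝ} {f : (Fin d → ℝ) → (Fin dy → ℝ) → ℝ} {y : Fin dy → ℝ}

lemma AssumptionA2.continuous_section (hf : AssumptionA2 d dy β B C C₂ f)
    (hy : InUnitCube dy y) : Continuous fun z => f z y := by
  obtain ⟨q, hq, hfq⟩ := hf.holder
  have hqc : Continuous q := hq.1.continuous
  simp_rw [hfq _ _ hy]
  fun_prop

lemma AssumptionA2.abs_le (hf : AssumptionA2 d dy β B C C₂ f) (hD : 0 < d + dy)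
    (hy : InUnitCube dy y) (z : Fin d → ℝ) : |f z y| ≤ B := by
  obtain ⟨q, hq, hfq⟩ := hf.holder
  rw [hfq _ _ hy]
  exact hq.abs_le hD _

end AssumptionA2

lemma sigmaHat_pos {C₂ t : ℝ} (hC₂ : 0 ≤ C₂) (ht : 0 < t) : 0 < sigmaHat C₂ t := by
  have hσ : 0 < sigmaT t :=
    Real.sqrt_pos.2 (sub_pos.2 (Real.exp_lt_one_iff.2 (neg_lt_zero.2 ht)))
  have hα : 0 < alphaT t := Real.exp_pos _
  unfold sigmaHat
  positivity

lemma setOf_forall_mem_Icc_eq_closedBall {d : ℕ} (μ : Fin d → ℝ) {R : ℝ} (hR : 0 ≤ R) :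
    {z : Fin d → ℝ | ∀ i, μ i - R ≤ z i ∧ z i ≤ μ i + R} = Metric.closedBall μ R := by
  ext z
  simp only [Set.mem_ofPred_eq, Metric.mem_closedBall, dist_pi_le_iff hR, Real.dist_eq,
    abs_le]
  exact forall_congr' fun i => by constructor <;> rintro ⟨h₁, h₂⟩ <;> constructor <;> linarith

lemma integral_comp_inv_smul_sub {d : ℕ} {σ : ℝ} (hσ : 0 ≤ σ) (μ : Fin d → ℝ)
    (g : (Fin d → ℝ) → ℝ) : ∫ z, g (σ⁻¹ • (z - μ)) = σ ^ d * ∫ w, g w := by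
  rw [integral_sub_right_eq_self (fun z => g (σ⁻¹ • z)) μ,
    Measure.integral_comp_inv_smul_of_nonneg volume g hσ, Module.finrank_fin_fun, smul_eq_mul]

lemma le_norm2_inv_smul_sub_of_notMem_closedBall {d : ℕ} {σ R : ℝ} (hσ : 0 < σ)
    {μ z : Fin d → ℝ} (hz : z ∉ Metric.closedBall μ R) : R / σ ≤ norm2 (σ⁻¹ • (z - μ)) := by
  rw [Metric.mem_closedBall, not_le] at hz
  rw [norm2_smul, abs_inv, abs_of_pos hσ, div_eq_inv_mul]
  gcongr
  exact hz.le.trans (dist_le_norm2_sub z μ)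

section GaussianMoment

variable {d m : ℕ} {σ R B : ℝ} {μ : Fin d → ℝ} {v : Fin d → ℕ} {g : (Fin d → ℝ) → ℝ}

def gaussMomentIntegrand (σ : ℝ) (μ : Fin d → ℝ) (v : Fin d → ℕ) (g : (Fin d → ℝ) → ℝ)
    (z : Fin d → ℝ) : ℝ :=
  (∏ i, ((z i - μ i) / σ) ^ v i) * g z * ((2 * π) ^ ((d : ℝ) / 2) * σ ^ d)⁻¹ *
    exp (-(norm2 fun i => z i - μ i) ^ 2 / (2 * σ ^ 2))

lemma abs_gaussMomentIntegrand_le (hσ : 0 < σ) (hgB : ∀ z, |g z| ≤ B)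
    (hv : ∑ i, v i ≤ m) {ρ : ℝ} (hρ : 0 ≤ ρ) {z : Fin d → ℝ}
    (hz : ρ ≤ norm2 (σ⁻¹ • (z - μ))) :
    |gaussMomentIntegrand σ μ v g z| ≤ exp (-ρ ^ 2 / 4) *
      (B * exp (2 * m ^ 2) * ((2 * π) ^ ((d : ℝ) / 2) * σ ^ d)⁻¹ *
        exp (-(1 / 8) * norm2 (σ⁻¹ • (z - μ)) ^ 2)) := by
  set w := σ⁻¹ • (z - μ)
  set c := ((2 * π) ^ ((d : ℝ) / 2) * σ ^ d)⁻¹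
  have hc : 0 < c := by positivity
  have hw : ∀ i, (z i - μ i) / σ = w i := fun i => by simp [w, div_eq_inv_mul]
  have hnorm : -(norm2 fun i => z i - μ i) ^ 2 / (2 * σ ^ 2) = -norm2 w ^ 2 / 2 := by
    rw [norm2_smul, abs_inv, abs_of_pos hσ]
    field_simp
    rfl
  unfold gaussMomentIntegrand
  rw [hnorm]
  simp only [hw]
  calc |(∏ i, w i ^ v i) * g z * c * exp (-norm2 w ^ 2 / 2)|
      = |∏ i, w i ^ v i| * |g z| * c * exp (-norm2 w ^ 2 / 2) := by
        rw [abs_mul, abs_mul, abs_mul, abs_of_pos hc, abs_of_pos (exp_pos _)]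
    _ ≤ (1 + norm2 w) ^ m * B * c * exp (-norm2 w ^ 2 / 2) := by
        have hprod := abs_prod_pow_le_one_add_norm2_pow w hv
        have hg := hgB z
        have hpow : 0 ≤ (1 + norm2 w) ^ m := (abs_nonneg _).trans hprod
        gcongr
    _ = B * c * ((1 + norm2 w) ^ m * exp (-norm2 w ^ 2 / 2)) := by ring
    _ ≤ B * c * (exp (2 * m ^ 2) * exp (-ρ ^ 2 / 4) * exp (-(1 / 8) * norm2 w ^ 2)) := by
        have hB : 0 ≤ B := (abs_nonneg _).trans (hgB z)
        exact mul_le_mul_of_nonneg_left (one_add_pow_mul_exp_le hρ hz) (by positivity)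
    _ = _ := by ring

theorem abs_integral_sub_setIntegral_closedBall_le (hσ : 0 < σ) (hR : 0 ≤ R)
    (hg : AEStronglyMeasurable g) (hgB : ∀ z, |g z| ≤ B) (hv : ∑ i, v i ≤ m) :
    |(∫ z, gaussMomentIntegrand σ μ v g z) -
        ∫ z in Metric.closedBall μ R, gaussMomentIntegrand σ μ v g z| ≤
      B * exp (2 * m ^ 2) * (∫ w : Fin d → ℝ, exp (-(1 / 8) * norm2 w ^ 2)) *
        exp (-(R / σ) ^ 2 / 4) := by
  set φ := gaussMomentIntegrand σ μ v g
  set c := ((2 * π) ^ ((d : ℝ) / 2) * σ ^ d)⁻¹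
  set I := ∫ w : Fin d → ℝ, exp (-(1 / 8) * norm2 w ^ 2)
  set δ := exp (-(R / σ) ^ 2 / 4)
  set ψ := fun z => B * exp (2 * m ^ 2) * c * exp (-(1 / 8) * norm2 (σ⁻¹ • (z - μ)) ^ 2)
  have hB : 0 ≤ B := (abs_nonneg _).trans (hgB 0)
  have hψ : Integrable ψ :=
    (((integrable_exp_neg_mul_norm2_sq (by norm_num)).comp_smul
      (inv_ne_zero hσ.ne')).comp_sub_right μ).const_mul _
  have hφ_meas : AEStronglyMeasurable φ := by
    unfold φ gaussMomentIntegrand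
    refine ((Continuous.aestronglyMeasurable ?_).mul hg).mul_const _ |>.mul
      (Continuous.aestronglyMeasurable ?_) <;> fun_prop
  have hφ : Integrable φ := hψ.mono' hφ_meas <| ae_of_all _ fun z => by
    have h := abs_gaussMomentIntegrand_le hσ hgB hv le_rfl (norm2_nonneg (σ⁻¹ • (z - μ)))
    rwa [zero_pow two_ne_zero, neg_zero, zero_div, exp_zero, one_mul] at h
  have htail : ∀ z ∈ (Metric.closedBall μ R)ᶜ, ‖φ z‖ ≤ δ * ψ z := fun z hz =>
    abs_gaussMomentIntegrand_le hσ hgB hv (by positivity)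
      (le_norm2_inv_smul_sub_of_notMem_closedBall hσ hz)
  rw [← integral_add_compl measurableSet_closedBall hφ, add_sub_cancel_left]
  calc |∫ z in (Metric.closedBall μ R)ᶜ, φ z|
      ≤ ∫ z in (Metric.closedBall μ R)ᶜ, δ * ψ z :=
        norm_integral_le_of_norm_le (hψ.const_mul δ).integrableOn
          ((ae_restrict_iff' measurableSet_closedBall.compl).2 (ae_of_all _ htail))
    _ ≤ ∫ z, δ * ψ z :=
        setIntegral_le_integral (hψ.const_mul δ) (ae_of_all _ fun z => by positivity)
    _ = B * exp (2 * m ^ 2) * I * δ * (c * σ ^ d) := by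
        rw [integral_const_mul, integral_const_mul,
          integral_comp_inv_smul_sub hσ.le μ fun w => exp (-(1 / 8) * norm2 w ^ 2)]
        ring
    _ ≤ B * exp (2 * m ^ 2) * I * δ := by
        have hI : 0 ≤ I := integral_nonneg fun _ => (exp_pos _).le
        have h2π : 1 ≤ (2 * π) ^ ((d : ℝ) / 2) :=
          Real.one_le_rpow (by linarith [Real.pi_gt_three]) (by positivity)
        have hcσ : c * σ ^ d = ((2 * π) ^ ((d : ℝ) / 2))⁻¹ := by
          simp only [c]
          field_simp
        refine mul_le_of_le_one_right (by positivity) ?_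
        rw [hcσ]
        exact inv_le_one_of_one_le₀ h2π

end GaussianMoment

lemma exists_pos_mul_exp_neg_sq_le (A : ℝ) {δ : ℝ} (hδ₀ : 0 < δ) (hδ₁ : δ < 1) :
    ∃ K : ℝ, 0 < K ∧ ∀ ε, 0 < ε → ε ≤ δ → A * exp (-(K * √(log ε⁻¹)) ^ 2 / 4) ≤ ε := by
  set A' := max A 1
  set L₀ := log δ⁻¹
  have hA' : 0 < A' := zero_lt_one.trans_le (le_max_right _ _)
  have hlogA' : 0 ≤ log A' := Real.log_nonneg (le_max_right _ _)
  have hL₀ : 0 < L₀ := Real.log_pos ((one_lt_inv₀ hδ₀).2 hδ₁)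
  refine ⟨2 * √(1 + log A' / L₀), by positivity, fun ε hε hεδ => ?_⟩
  set L := log ε⁻¹
  have hL : L₀ ≤ L := Real.log_le_log (inv_pos.2 hδ₀) (inv_anti₀ hε hεδ)
  have hsq : (2 * √(1 + log A' / L₀) * √L) ^ 2 / 4 = L + log A' * (L / L₀) := by
    rw [mul_pow, mul_pow, sq_sqrt (by positivity), sq_sqrt (hL₀.le.trans hL)]
    field_simp
    ring
  have hratio : 1 ≤ L / L₀ := (one_le_div hL₀).2 hL
  calc A * exp (-(2 * √(1 + log A' / L₀) * √L) ^ 2 / 4)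
      ≤ A' * exp (-(L + log A')) := by
        rw [neg_div, hsq]
        gcongr
        · exact le_max_left _ _
        · nlinarith
    _ = ε := by
        rw [neg_add, exp_add, exp_neg, exp_log (inv_pos.2 hε), exp_neg, exp_log hA', inv_inv]
        field_simp

theorem statement15_general
    (d : ℕ) (n : ℕ) (B : ℝ) :
    ∃ Cnd : ℝ, 0 < Cnd ∧
      ∀ dy : ℕ, 1 ≤ dy →
        ∀ (β C C₂ : ℝ) (f : (Fin d → ℝ) → (Fin dy → ℝ) → ℝ),
          AssumptionA2 d dy β B C C₂ f →
          ∀ v : Fin d → ℕ, (∑ i, v i) ≤ n →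
            ∀ (x : Fin d → ℝ) (y : Fin dy → ℝ), InUnitCube dy y →
              ∀ t : ℝ, 0 < t → ∀ ε : ℝ, 0 < ε → ε < 0.99 →
                |(∫ z : Fin d → ℝ,
                    (∏ i, ((z i - alphaHat C₂ t * x i) / sigmaHat C₂ t) ^ v i) *
                      f z y * ((2 * Real.pi) ^ ((d : ℝ) / 2) * sigmaHat C₂ t ^ d)⁻¹ *
                      Real.exp (-(norm2 (fun i => z i - alphaHat C₂ t * x i)) ^ 2 /
                        (2 * sigmaHat C₂ t ^ 2))) -
                  (∫ z in {z : Fin d → ℝ | ∀ i,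
                      alphaHat C₂ t * x i - Cnd * sigmaHat C₂ t * Real.sqrt (Real.log ε⁻¹)
                          ≤ z i ∧
                        z i ≤ alphaHat C₂ t * x i +
                          Cnd * sigmaHat C₂ t * Real.sqrt (Real.log ε⁻¹)},
                    (∏ i, ((z i - alphaHat C₂ t * x i) / sigmaHat C₂ t) ^ v i) *
                      f z y * ((2 * Real.pi) ^ ((d : ℝ) / 2) * sigmaHat C₂ t ^ d)⁻¹ *
                      Real.exp (-(norm2 (fun i => z i - alphaHat C₂ t * x i)) ^ 2 /
                        (2 * sigmaHat C₂ t ^ 2)))|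
                  ≤ ε := by
  obtain ⟨K, hK, hKε⟩ := exists_pos_mul_exp_neg_sq_le
    (B * exp (2 * n ^ 2) * ∫ w : Fin d → ℝ, exp (-(1 / 8) * norm2 w ^ 2))
    (δ := 0.99) (by norm_num) (by norm_num)
  refine ⟨K, hK, fun dy hdy β C C₂ f hf v hv x y hy t ht ε hε hεδ => ?_⟩
  have hσ : 0 < sigmaHat C₂ t := sigmaHat_pos hf.C2_pos.le ht
  have hR : 0 ≤ K * sigmaHat C₂ t * √(log ε⁻¹) := by positivity
  rw [setOf_forall_mem_Icc_eq_closedBall (fun i => alphaHat C₂ t * x i) hR]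
  refine (abs_integral_sub_setIntegral_closedBall_le hσ hR
    (hf.continuous_section hy).aestronglyMeasurable (hf.abs_le (by omega) hy) hv).trans ?_
  rw [mul_right_comm K, mul_div_cancel_right₀ _ hσ.ne']
  exact hKε ε hε hεδ.le

/-- Lemma B.8: clipping the Gaussian-weighted integral of `f` to a
bounded region, under Assumption (A2). -/
theorem statement15
    (d : ℕ) (hd : 1 ≤ d) (n : ℕ) (B : ℝ) (hB : 0 < B) :
    ∃ Cnd : ℝ, 0 < Cnd ∧
      ∀ dy : ℕ, 1 ≤ dy →
        ∀ (β C C₂ : ℝ) (f : (Fin d → ℝ) → (Fin dy → ℝ) → ℝ),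
          AssumptionA2 d dy β B C C₂ f →
          ∀ v : Fin d → ℕ, (∑ i, v i) ≤ n →
            ∀ (x : Fin d → ℝ) (y : Fin dy → ℝ), InUnitCube dy y →
              ∀ t : ℝ, 0 < t → ∀ ε : ℝ, 0 < ε → ε < 0.99 →
                |(∫ z : Fin d → ℝ,
                    (∏ i, ((z i - alphaHat C₂ t * x i) / sigmaHat C₂ t) ^ v i) *
                      f z y * ((2 * Real.pi) ^ ((d : ℝ) / 2) * sigmaHat C₂ t ^ d)⁻¹ *
                      Real.exp (-(norm2 (fun i => z i - alphaHat C₂ t * x i)) ^ 2 /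
                        (2 * sigmaHat C₂ t ^ 2))) -
                  (∫ z in {z : Fin d → ℝ | ∀ i,
                      alphaHat C₂ t * x i - Cnd * sigmaHat C₂ t * Real.sqrt (Real.log ε⁻¹)
                          ≤ z i ∧
                        z i ≤ alphaHat C₂ t * x i +
                          Cnd * sigmaHat C₂ t * Real.sqrt (Real.log ε⁻¹)},
                    (∏ i, ((z i - alphaHat C₂ t * x i) / sigmaHat C₂ t) ^ v i) *
                      f z y * ((2 * Real.pi) ^ ((d : ℝ) / 2) * sigmaHat C₂ t ^ d)⁻¹ *
                      Real.exp (-(norm2 (fun i => z i - alphaHat C₂ t * x i)) ^ 2 /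
                        (2 * sigmaHat C₂ t ^ 2)))|
                  ≤ ε :=
  statement15_general d n B

end CDM
end
end
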